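/- arXiv:1005.0171 — 2 statements merged into one kernel-verified Lean document; each statement's English description precedes it below -/
import Mathlib

section
/- A state s on an MV-algebra M is extremal in the state space S(M) if and only if s(x ∧ y) = min{s(x), s(y)} for all x, y ∈ M. -/
/-- An MV-algebra. -/
structure MVAlgebra (M : Type*) where
  oplus : M → M → M
  star : M → M
  zero : M
  oplus_comm : ∀ x y, oplus x y = oplus y x
  oplus_assoc : ∀ x y z, oplus (oplus x y) z = oplus x (oplus y z)
  oplus_zero : ∀ x, oplus x zero = x
  star_star : ∀ x, star (star x) = x
  oplus_one : ∀ x, oplus x (star zero) = star zero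
  lukasiewicz : ∀ x y, oplus x (star (oplus x (star y))) = oplus y (star (oplus y (star x)))

namespace MVAlgebra

variable {M : Type*}

def one (A : MVAlgebra M) : M := A.star A.zero

def odot (A : MVAlgebra M) (x y : M) : M := A.star (A.oplus (A.star x) (A.star y))

/-- The lattice meet in an MV-algebra: `x ∧ y = x ⊙ (x* ⊕ y)`. -/
def inf (A : MVAlgebra M) (x y : M) : M := A.odot x (A.oplus (A.star x) y)

/-- A state on an MV-algebra. -/
def IsState (A : MVAlgebra M) (s : M → ℝ) : Prop :=
  (∀ x, 0 ≤ s x ∧ s x ≤ 1) ∧ s A.one = 1 ∧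
  ∀ x y, A.odot x y = A.zero → s (A.oplus x y) = s x + s y

/-- An extremal state on an MV-algebra. -/
def ExtremalState (A : MVAlgebra M) (s : M → ℝ) : Prop :=
  A.IsState s ∧ ∀ s₁ s₂ : M → ℝ, A.IsState s₁ → A.IsState s₂ → ∀ t : ℝ, 0 < t → t < 1 →
    (∀ x, s x = t * s₁ x + (1 - t) * s₂ x) → s₁ = s ∧ s₂ = s

end MVAlgebra

namespace MVAlgebra

variable {M : Type*}

variable (A : MVAlgebra M)

lemma star_inj {x y : M} (h : A.star x = A.star y) : x = y := by
  have := congrArg A.star h; rwa [A.star_star, A.star_star] at this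

lemma zero_oplus (x : M) : A.oplus A.zero x = x := by rw [A.oplus_comm, A.oplus_zero]

lemma one_oplus (x : M) : A.oplus A.one x = A.one := by
  rw [A.oplus_comm]; exact A.oplus_one x

lemma oplus_one' (x : M) : A.oplus x A.one = A.one := A.oplus_one x

lemma star_one : A.star A.one = A.zero := A.star_star A.zero

lemma oplus_star_self (x : M) : A.oplus x (A.star x) = A.one := by
  have h := A.lukasiewicz A.one x
  rw [A.one_oplus, A.star_one, A.oplus_zero] at h
  exact h.symm

lemma star_oplus_self (x : M) : A.oplus (A.star x) x = A.one := by
  rw [A.oplus_comm]; exact A.oplus_star_self x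

lemma odot_def (x y : M) : A.odot x y = A.star (A.oplus (A.star x) (A.star y)) := rfl

lemma odot_comm (x y : M) : A.odot x y = A.odot y x := by
  unfold odot; rw [A.oplus_comm]

lemma odot_assoc (x y z : M) :
    A.odot (A.odot x y) z = A.odot x (A.odot y z) := by
  unfold odot; rw [A.star_star, A.star_star, A.oplus_assoc]

lemma odot_one (x : M) : A.odot x A.one = x := by
  unfold odot; rw [A.star_one, A.oplus_zero, A.star_star]

lemma one_odot (x : M) : A.odot A.one x = x := by rw [A.odot_comm, A.odot_one]

lemma odot_zero (x : M) : A.odot x A.zero = A.zero := by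
  show A.star (A.oplus (A.star x) A.one) = A.zero
  rw [A.oplus_one', A.star_one]

lemma zero_odot (x : M) : A.odot A.zero x = A.zero := by rw [A.odot_comm, A.odot_zero]

lemma odot_star_self (x : M) : A.odot x (A.star x) = A.zero := by
  unfold odot; rw [A.star_star, A.star_oplus_self]; exact A.star_one

lemma star_oplus (x y : M) : A.star (A.oplus x y) = A.odot (A.star x) (A.star y) := by
  unfold odot; rw [A.star_star, A.star_star]

lemma star_odot (x y : M) : A.star (A.odot x y) = A.oplus (A.star x) (A.star y) := by
  unfold odot; rw [A.star_star]

/-- The natural order. -/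
def le (x y : M) : Prop := A.oplus (A.star x) y = A.one

lemma le_refl (x : M) : A.le x x := A.star_oplus_self x

lemma le_iff_odot {x y : M} : A.le x y ↔ A.odot x (A.star y) = A.zero := by
  unfold le odot
  rw [A.star_star]
  constructor
  · intro h; rw [h]; exact A.star_one
  · intro h
    have := congrArg A.star h
    rw [A.star_star] at this
    rw [this]; rfl

lemma le_self_oplus (x z : M) : A.le x (A.oplus x z) := by
  unfold le
  rw [← A.oplus_assoc, A.star_oplus_self, A.one_oplus]

lemma le_oplus_self (x z : M) : A.le x (A.oplus z x) := by
  rw [A.oplus_comm]; exact A.le_self_oplus x z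

lemma eq_oplus_of_le {x y : M} (h : A.le x y) :
    y = A.oplus x (A.star (A.oplus x (A.star y))) := by
  have l := A.lukasiewicz x y
  unfold le at h
  rw [A.oplus_comm (A.star x) y] at h
  rw [show A.oplus y (A.star x) = A.one from h] at l
  rw [A.star_one, A.oplus_zero] at l
  exact l.symm

lemma le_iff_exists {x y : M} : A.le x y ↔ ∃ z, y = A.oplus x z := by
  constructor
  · intro h; exact ⟨_, A.eq_oplus_of_le h⟩
  · rintro ⟨z, rfl⟩
    unfold le
    rw [← A.oplus_assoc, A.star_oplus_self, A.one_oplus]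

lemma le_antisymm {x y : M} (h1 : A.le x y) (h2 : A.le y x) : x = y := by
  have e := A.eq_oplus_of_le h1
  unfold le at h2
  rw [A.oplus_comm x (A.star y)] at e
  rw [h2, A.star_one, A.oplus_zero] at e
  exact e.symm

lemma le_trans {x y z : M} (h1 : A.le x y) (h2 : A.le y z) : A.le x z := by
  rw [le_iff_exists] at h1 h2 ⊢
  obtain ⟨u, rfl⟩ := h1; obtain ⟨v, rfl⟩ := h2
  exact ⟨A.oplus u v, A.oplus_assoc x u v⟩

lemma le_one (x : M) : A.le x A.one := by unfold le; exact A.oplus_one' _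

lemma zero_le (x : M) : A.le A.zero x := by
  unfold le
  exact A.one_oplus x

lemma le_zero_iff {x : M} : A.le x A.zero ↔ x = A.zero := by
  constructor
  · intro h; exact A.le_antisymm h (A.zero_le x)
  · rintro rfl; exact A.le_refl _

lemma oplus_le_oplus_left {x y : M} (z : M) (h : A.le x y) :
    A.le (A.oplus x z) (A.oplus y z) := by
  rw [le_iff_exists] at h ⊢
  obtain ⟨u, rfl⟩ := h
  refine ⟨u, ?_⟩
  rw [A.oplus_assoc, A.oplus_comm u z, ← A.oplus_assoc]

lemma oplus_le_oplus {x y u v : M} (h1 : A.le x y) (h2 : A.le u v) :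
    A.le (A.oplus x u) (A.oplus y v) := by
  refine A.le_trans (A.oplus_le_oplus_left u h1) ?_
  rw [A.oplus_comm y u, A.oplus_comm y v]
  exact A.oplus_le_oplus_left y h2

lemma star_le_star {x y : M} (h : A.le x y) : A.le (A.star y) (A.star x) := by
  unfold le at h ⊢
  rw [A.star_star, A.oplus_comm]
  exact h

lemma odot_le_odot {x y u v : M} (h1 : A.le x y) (h2 : A.le u v) :
    A.le (A.odot x u) (A.odot y v) := by
  unfold odot
  exact A.star_le_star (A.oplus_le_oplus (A.star_le_star h1) (A.star_le_star h2))

lemma odot_le_left (x y : M) : A.le (A.odot x y) x := by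
  have := A.odot_le_odot (A.le_refl x) (A.le_one y)
  rwa [A.odot_one] at this

lemma odot_le_right (x y : M) : A.le (A.odot x y) y := by
  rw [A.odot_comm]; exact A.odot_le_left y x

/-- Join. -/
def sup (A : MVAlgebra M) (x y : M) : M := A.oplus (A.odot x (A.star y)) y

lemma sup_eq_oplus_form (x y : M) :
    A.sup x y = A.oplus y (A.star (A.oplus y (A.star x))) := by
  unfold sup odot
  rw [A.star_star, A.oplus_comm]
  rw [A.oplus_comm (A.star x) y]

lemma sup_comm (x y : M) : A.sup x y = A.sup y x := by
  rw [A.sup_eq_oplus_form, A.sup_eq_oplus_form]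
  exact (A.lukasiewicz y x)

lemma le_sup_right (x y : M) : A.le y (A.sup x y) := A.le_oplus_self y _

lemma le_sup_left (x y : M) : A.le x (A.sup x y) := by
  rw [A.sup_comm]; exact A.le_sup_right y x

lemma sup_of_le {y z : M} (h : A.le y z) : A.sup z y = z := by
  have e := A.eq_oplus_of_le h
  unfold sup
  rw [A.oplus_comm]
  rw [show A.odot z (A.star y) = A.star (A.oplus y (A.star z)) by
    unfold odot; rw [A.star_star, A.oplus_comm]]
  exact e.symm

lemma sup_le {x y z : M} (h1 : A.le x z) (h2 : A.le y z) : A.le (A.sup x y) z := by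
  have step : A.le (A.sup x y) (A.sup z y) :=
    A.oplus_le_oplus_left y (A.odot_le_odot h1 (A.le_refl _))
  rwa [A.sup_of_le h2] at step

lemma inf_eq_star_sup (x y : M) : A.inf x y = A.star (A.sup (A.star x) (A.star y)) := by
  have h := A.lukasiewicz (A.star x) (A.star y)
  rw [A.star_star, A.star_star] at h
  unfold inf sup odot
  simp only [A.star_star]
  apply congrArg
  rw [h, A.oplus_comm x (A.star y), A.oplus_comm]

lemma star_inf (x y : M) : A.star (A.inf x y) = A.sup (A.star x) (A.star y) := by
  rw [A.inf_eq_star_sup, A.star_star]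

lemma star_sup (x y : M) : A.star (A.sup x y) = A.inf (A.star x) (A.star y) := by
  rw [A.inf_eq_star_sup, A.star_star, A.star_star]

lemma inf_comm (x y : M) : A.inf x y = A.inf y x := by
  rw [A.inf_eq_star_sup, A.inf_eq_star_sup, A.sup_comm]

lemma inf_le_left (x y : M) : A.le (A.inf x y) x := by
  rw [A.inf_eq_star_sup]
  have := A.star_le_star (A.le_sup_left (A.star x) (A.star y))
  rwa [A.star_star] at this

lemma inf_le_right (x y : M) : A.le (A.inf x y) y := by
  rw [A.inf_comm]; exact A.inf_le_left y x

lemma le_inf {x y z : M} (h1 : A.le z x) (h2 : A.le z y) : A.le z (A.inf x y) := by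
  rw [A.inf_eq_star_sup]
  have := A.star_le_star (A.sup_le (A.star_le_star h1) (A.star_le_star h2))
  rwa [A.star_star] at this

lemma inf_of_le {x y : M} (h : A.le x y) : A.inf x y = x :=
  A.le_antisymm (A.inf_le_left x y) (A.le_inf (A.le_refl x) h)

/-- Residuation. -/
lemma odot_le_iff {x y z : M} :
    A.le (A.odot x y) z ↔ A.le x (A.oplus (A.star y) z) := by
  constructor
  · intro h
    have h1 : A.le x (A.oplus (A.odot x y) (A.star y)) := by
      have h0 := A.le_sup_left x (A.star y)
      unfold sup at h0
      rwa [A.star_star] at h0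
    refine A.le_trans h1 (A.le_trans (A.oplus_le_oplus_left (A.star y) h) ?_)
    rw [A.oplus_comm z (A.star y)]
    exact A.le_refl _
  · intro h
    have h2 : A.le (A.odot x y) (A.odot (A.oplus (A.star y) z) y) :=
      A.odot_le_odot h (A.le_refl y)
    refine A.le_trans h2 ?_
    have : A.odot (A.oplus (A.star y) z) y = A.inf y z := by
      unfold inf
      rw [A.odot_comm, A.oplus_comm]
    rw [this]
    exact A.inf_le_right y z

lemma odot_sup (x y z : M) :
    A.odot x (A.sup y z) = A.sup (A.odot x y) (A.odot x z) := by
  apply A.le_antisymm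
  · rw [A.odot_comm, A.odot_le_iff]
    apply A.sup_le
    · rw [← A.odot_le_iff, A.odot_comm]
      exact A.le_sup_left _ _
    · rw [← A.odot_le_iff, A.odot_comm]
      exact A.le_sup_right _ _
  · apply A.sup_le
    · exact A.odot_le_odot (A.le_refl x) (A.le_sup_left y z)
    · exact A.odot_le_odot (A.le_refl x) (A.le_sup_right y z)

lemma oplus_inf (x y z : M) :
    A.oplus x (A.inf y z) = A.inf (A.oplus x y) (A.oplus x z) := by
  apply A.star_inj
  rw [A.star_oplus, A.star_inf, A.odot_sup, A.star_inf]
  rw [← A.star_oplus, ← A.star_oplus]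

/-- identity (b): (x ⊕ y) ⊙ x* = y ⊙ (x ⊙ y)*. -/
lemma oplus_odot_star (x y : M) :
    A.odot (A.oplus x y) (A.star x) = A.odot y (A.star (A.odot x y)) := by
  unfold odot
  simp only [A.star_star]
  apply congrArg
  have h := A.lukasiewicz x (A.star y)
  rw [A.star_star] at h
  rw [A.oplus_comm (A.star (A.oplus x y)) x, h, A.oplus_comm (A.star y) (A.star x)]

lemma odot_absorb_zero (x y : M) : A.odot y (A.odot x (A.star y)) = A.zero := by
  rw [A.odot_comm x (A.star y), ← A.odot_assoc, A.odot_star_self, A.zero_odot]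

/-- x = (x ∧ y) ⊕ (x ⊙ y*). -/
lemma inf_oplus_diff (x y : M) : A.oplus (A.inf x y) (A.odot x (A.star y)) = x := by
  have hv : A.odot x (A.star y) = A.star (A.oplus (A.star x) y) := by
    unfold odot; rw [A.star_star]
  have h : A.oplus (A.inf x y) (A.odot x (A.star y)) = A.sup x (A.odot x (A.star y)) := by
    unfold sup inf
    rw [hv, A.star_star]
  rw [h]
  exact A.sup_of_le (A.odot_le_left x (A.star y))

lemma inf_orth_diff (x y : M) : A.odot (A.inf x y) (A.odot x (A.star y)) = A.zero := by
  have h := A.odot_le_odot (A.inf_le_right x y) (A.le_refl (A.odot x (A.star y)))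
  rw [A.odot_absorb_zero] at h
  exact A.le_zero_iff.mp h

lemma sup_orth (x y : M) : A.odot y (A.odot x (A.star y)) = A.zero :=
  A.odot_absorb_zero x y

lemma sup_eq_oplus (x y : M) : A.sup x y = A.oplus y (A.odot x (A.star y)) := by
  unfold sup; rw [A.oplus_comm]

lemma oplus_decomp_orth (x y : M) :
    A.odot x (A.odot (A.oplus x y) (A.star x)) = A.zero :=
  A.odot_absorb_zero (A.oplus x y) x

lemma oplus_decomp_add (x y : M) :
    A.oplus x (A.odot (A.oplus x y) (A.star x)) = A.oplus x y := by
  have h : A.oplus x (A.odot (A.oplus x y) (A.star x)) = A.sup (A.oplus x y) x := by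
    unfold sup; rw [A.oplus_comm]
  rw [h]
  exact A.sup_of_le (A.le_self_oplus x y)

lemma oplus_decomp_rest (x y : M) :
    A.oplus (A.odot (A.oplus x y) (A.star x)) (A.odot x y) = y := by
  rw [A.oplus_odot_star]
  have h : A.oplus (A.odot y (A.star (A.odot x y))) (A.odot x y) = A.sup y (A.odot x y) := rfl
  rw [h]
  exact A.sup_of_le (A.odot_le_right x y)

lemma oplus_decomp_rest_orth (x y : M) :
    A.odot (A.odot (A.oplus x y) (A.star x)) (A.odot x y) = A.zero := by
  rw [A.oplus_odot_star, A.odot_assoc, A.odot_comm (A.star (A.odot x y)) (A.odot x y),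
    A.odot_star_self, A.odot_zero]

/-- Disjointness: (x ⊖ y) ∧ (y ⊖ x) = 0. -/
lemma inf_diff_diff (x y : M) :
    A.inf (A.odot x (A.star y)) (A.odot y (A.star x)) = A.zero := by
  set u := A.odot x (A.star y) with hu
  set v := A.odot y (A.star x) with hvv
  set w := A.inf x y with hw
  set t := A.inf u v with htt
  have h1 : A.le (A.oplus t w) x := by
    have e : A.oplus u w = x := by
      rw [A.oplus_comm u w, hw, hu]
      exact A.inf_oplus_diff x y
    have h := A.oplus_le_oplus_left w (A.inf_le_left u v)
    rwa [e] at h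
  have h2 : A.le (A.oplus t w) y := by
    have e : A.oplus v w = y := by
      rw [A.oplus_comm v w, hw, A.inf_comm x y, hvv]
      exact A.inf_oplus_diff y x
    have h := A.oplus_le_oplus_left w (A.inf_le_right u v)
    rwa [e] at h
  have heq : A.oplus t w = w := A.le_antisymm (A.le_inf h1 h2) (A.le_oplus_self w _)
  have h5 : A.inf t (A.star w) = A.odot (A.oplus w t) (A.star w) := by
    rw [A.oplus_odot_star w t]
    unfold inf
    rw [← A.star_odot, A.odot_comm t w]
  rw [A.oplus_comm w t, heq, A.odot_star_self] at h5
  have htw : A.le t (A.star w) := by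
    refine A.le_trans (A.inf_le_right u v) (A.le_trans (A.odot_le_right y (A.star x)) ?_)
    exact A.star_le_star (A.inf_le_left x y)
  rw [← A.inf_of_le htw]
  exact h5

lemma inf_le_oplus_left (x y z : M) :
    A.le (A.inf x (A.oplus y z)) (A.oplus (A.inf x y) z) := by
  have h : A.oplus (A.inf x y) z = A.oplus z (A.inf x y) := A.oplus_comm _ _
  rw [h, A.oplus_inf]
  apply A.le_inf
  · refine A.le_trans (A.inf_le_left _ _) ?_
    exact A.le_oplus_self x z
  · refine A.le_trans (A.inf_le_right _ _) ?_
    rw [A.oplus_comm y z]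
    exact A.le_refl _

/-- (x ⊕ y) ∧ z ≤ (x ∧ z) ⊕ (y ∧ z). -/
lemma inf_oplus_subdistrib (x y z : M) :
    A.le (A.inf (A.oplus x y) z) (A.oplus (A.inf x z) (A.inf y z)) := by
  have h1 : A.le (A.inf (A.oplus x y) z) (A.oplus (A.inf z x) y) := by
    rw [A.inf_comm]
    exact A.inf_le_oplus_left z x y
  have h2 : A.le (A.inf (A.oplus x y) z) (A.oplus (A.inf z x) z) := by
    refine A.le_trans (A.inf_le_right _ _) ?_
    exact A.le_oplus_self z _
  have h3 := A.le_inf h1 h2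
  rw [← A.oplus_inf] at h3
  rwa [A.inf_comm z x] at h3

lemma inf_zero (x : M) : A.inf x A.zero = A.zero := by
  unfold inf
  rw [A.oplus_zero, A.odot_star_self]

lemma zero_inf (x : M) : A.inf A.zero x = A.zero := by
  rw [A.inf_comm, A.inf_zero]

lemma one_inf (x : M) : A.inf A.one x = x := by
  unfold inf
  rw [A.star_one, A.zero_oplus, A.one_odot]

lemma oplus_zero_zero : A.oplus A.zero A.zero = A.zero := A.oplus_zero _

lemma odot_zero_zero : A.odot A.zero A.zero = A.zero := A.odot_zero _

/-- n-fold ⊕. -/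
def nsmul (A : MVAlgebra M) : ℕ → M → M
  | 0, _ => A.zero
  | n + 1, a => A.oplus (A.nsmul n a) a

lemma nsmul_le_succ (n : ℕ) (a : M) : A.le (A.nsmul n a) (A.nsmul (n + 1) a) :=
  A.le_self_oplus _ _

lemma nsmul_mono {m n : ℕ} (h : m ≤ n) (a : M) : A.le (A.nsmul m a) (A.nsmul n a) := by
  induction n with
  | zero => rw [Nat.le_zero] at h; subst h; exact A.le_refl _
  | succ k ih =>
    rcases Nat.lt_or_ge m (k+1) with h'|h'
    · exact A.le_trans (ih (Nat.lt_succ_iff.mp h')) (A.nsmul_le_succ k a)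
    · have : m = k + 1 := Nat.le_antisymm h h'
      subst this; exact A.le_refl _

lemma nsmul_add (m n : ℕ) (a : M) :
    A.nsmul (m + n) a = A.oplus (A.nsmul m a) (A.nsmul n a) := by
  induction n with
  | zero => simp [nsmul, A.oplus_zero]
  | succ k ih =>
    show A.nsmul (m + k + 1) a = _
    show A.oplus (A.nsmul (m + k) a) a = _
    rw [ih]
    show _ = A.oplus (A.nsmul m a) (A.oplus (A.nsmul k a) a)
    rw [A.oplus_assoc]

lemma inf_nsmul_zero {a b : M} (h : A.inf a b = A.zero) (n : ℕ) :
    A.inf (A.nsmul n a) b = A.zero := by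
  induction n with
  | zero => exact A.zero_inf b
  | succ k ih =>
    have step := A.inf_oplus_subdistrib (A.nsmul k a) a b
    rw [ih, h, A.oplus_zero] at step
    exact A.le_zero_iff.mp step

section States

variable {A : MVAlgebra M} {s : M → ℝ}

lemma IsState.nonneg (hs : A.IsState s) (x : M) : 0 ≤ s x := (hs.1 x).1

lemma IsState.le_one' (hs : A.IsState s) (x : M) : s x ≤ 1 := (hs.1 x).2

lemma IsState.one_eq (hs : A.IsState s) : s A.one = 1 := hs.2.1

lemma IsState.add (hs : A.IsState s) {x y : M} (h : A.odot x y = A.zero) :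
    s (A.oplus x y) = s x + s y := hs.2.2 x y h

lemma IsState.zero_eq (hs : A.IsState s) : s A.zero = 0 := by
  have h := hs.add (A.odot_zero_zero)
  rw [A.oplus_zero_zero] at h
  linarith

lemma IsState.mono (hs : A.IsState s) {x y : M} (h : A.le x y) : s x ≤ s y := by
  have hz : A.odot x (A.star (A.oplus x (A.star y))) = A.zero := by
    unfold odot
    rw [A.star_star, ← A.oplus_assoc, A.star_oplus_self, A.one_oplus, A.star_one]
  have e := A.eq_oplus_of_le h
  have := hs.add hz
  rw [← e] at this
  have := hs.nonneg (A.star (A.oplus x (A.star y)))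
  linarith [hs.add hz, hs.nonneg (A.star (A.oplus x (A.star y)))]

lemma IsState.star_eq (hs : A.IsState s) (x : M) : s (A.star x) = 1 - s x := by
  have h := hs.add (A.odot_star_self x)
  rw [A.oplus_star_self, hs.one_eq] at h
  linarith

lemma IsState.valuation (hs : A.IsState s) (x y : M) :
    s (A.oplus x y) + s (A.odot x y) = s x + s y := by
  have h1 := hs.add (A.oplus_decomp_orth x y)
  rw [A.oplus_decomp_add x y] at h1
  have h2 := hs.add (A.oplus_decomp_rest_orth x y)
  rw [A.oplus_decomp_rest x y] at h2
  linarith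

lemma IsState.subadd (hs : A.IsState s) (x y : M) :
    s (A.oplus x y) ≤ s x + s y := by
  have := hs.valuation x y
  have := hs.nonneg (A.odot x y)
  linarith

lemma IsState.sup_eq (hs : A.IsState s) (x y : M) :
    s (A.sup x y) = s y + s (A.odot x (A.star y)) := by
  have horth : A.odot (A.odot x (A.star y)) y = A.zero := by
    rw [A.odot_comm]; exact A.sup_orth x y
  have h := hs.add horth
  unfold sup
  linarith

lemma IsState.inf_add_diff (hs : A.IsState s) (x y : M) :
    s x = s (A.inf x y) + s (A.odot x (A.star y)) := by
  have h := hs.add (A.inf_orth_diff x y)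
  rw [A.inf_oplus_diff x y] at h
  exact h

lemma IsState.inf_le_min (hs : A.IsState s) (x y : M) :
    s (A.inf x y) ≤ min (s x) (s y) :=
  le_min (hs.mono (A.inf_le_left x y)) (hs.mono (A.inf_le_right x y))

section MinToExtremal

variable {A : MVAlgebra M} {s s₁ s₂ : M → ℝ} {t : ℝ}

lemma conv_zero (hs1 : A.IsState s₁) (hnn2 : ∀ z, 0 ≤ s₂ z) (ht0 : 0 < t) (ht1 : t < 1)
    (hconv : ∀ x, s x = t * s₁ x + (1 - t) * s₂ x) {z : M} (hz : s z = 0) : s₁ z = 0 := by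
  have h := hconv z
  rw [hz] at h
  nlinarith [hs1.nonneg z, hnn2 z, hs1.le_one' z]

lemma diff_zero (hs : A.IsState s) (hmin : ∀ x y : M, s (A.inf x y) = min (s x) (s y))
    {x y : M} (h : s x ≤ s y) : s (A.odot x (A.star y)) = 0 := by
  have h1 := hs.inf_add_diff x y
  rw [hmin x y, min_eq_left h] at h1
  linarith

lemma L1 (hs : A.IsState s) (hmin : ∀ x y : M, s (A.inf x y) = min (s x) (s y))
    (hs1 : A.IsState s₁) (hnn2 : ∀ z, 0 ≤ s₂ z) (ht0 : 0 < t) (ht1 : t < 1)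
    (hconv : ∀ x, s x = t * s₁ x + (1 - t) * s₂ x)
    {x y : M} (h : s x ≤ s y) : s₁ x ≤ s₁ y := by
  have h0 : s₁ (A.odot x (A.star y)) = 0 :=
    conv_zero hs1 hnn2 ht0 ht1 hconv (diff_zero hs hmin h)
  have h2 : s₁ x ≤ s₁ (A.sup x y) := hs1.mono (A.le_sup_left x y)
  rw [hs1.sup_eq x y, h0] at h2
  linarith

lemma L1' (hs : A.IsState s) (hmin : ∀ x y : M, s (A.inf x y) = min (s x) (s y))
    (hs1 : A.IsState s₁) (hnn2 : ∀ z, 0 ≤ s₂ z) (ht0 : 0 < t) (ht1 : t < 1)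
    (hconv : ∀ x, s x = t * s₁ x + (1 - t) * s₂ x)
    {x y : M} (h : s x = s y) : s₁ x = s₁ y :=
  _root_.le_antisymm (L1 hs hmin hs1 hnn2 ht0 ht1 hconv h.le) (L1 hs hmin hs1 hnn2 ht0 ht1 hconv h.ge)

lemma L2 (hs : A.IsState s) (hmin : ∀ x y : M, s (A.inf x y) = min (s x) (s y))
    (hs1 : A.IsState s₁) (hnn2 : ∀ z, 0 ≤ s₂ z) (ht0 : 0 < t) (ht1 : t < 1)
    (hconv : ∀ x, s x = t * s₁ x + (1 - t) * s₂ x)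
    {x y : M} (h : s x + s y ≤ 1) :
    ∃ w, s w = s x + s y ∧ s₁ w = s₁ x + s₁ y := by
  set u := A.inf x (A.star y) with hu
  have hsu : s u = s x := by
    rw [hu, hmin x (A.star y), hs.star_eq y, min_eq_left (by linarith)]
  have hs1u : s₁ u = s₁ x := L1' hs hmin hs1 hnn2 ht0 ht1 hconv hsu
  have horth : A.odot u y = A.zero := by
    have hle : A.le (A.odot u y) (A.odot (A.star y) y) :=
      A.odot_le_odot (A.inf_le_right x (A.star y)) (A.le_refl y)
    rw [A.odot_comm (A.star y) y, A.odot_star_self] at hle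
    exact A.le_zero_iff.mp hle
  refine ⟨A.oplus u y, ?_, ?_⟩
  · rw [hs.add horth, hsu]
  · rw [hs1.add horth, hs1u]

lemma L3 (hs : A.IsState s) (hmin : ∀ x y : M, s (A.inf x y) = min (s x) (s y))
    (hs1 : A.IsState s₁) (hnn2 : ∀ z, 0 ≤ s₂ z) (ht0 : 0 < t) (ht1 : t < 1)
    (hconv : ∀ x, s x = t * s₁ x + (1 - t) * s₂ x)
    (x : M) : ∀ k : ℕ, (k : ℝ) * s x ≤ 1 →
    ∃ w, s w = (k : ℝ) * s x ∧ s₁ w = (k : ℝ) * s₁ x := by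
  intro k
  induction k with
  | zero => intro _; exact ⟨A.zero, by simp [hs.zero_eq], by simp [hs1.zero_eq]⟩
  | succ n ih =>
    intro hk
    have hxnn := hs.nonneg x
    have hn : (n : ℝ) * s x ≤ 1 := by
      push_cast at hk
      nlinarith
    obtain ⟨w, hw, hw1⟩ := ih hn
    have hsum : s w + s x ≤ 1 := by
      rw [hw]; push_cast at hk ⊢; nlinarith
    obtain ⟨w', hw', hw1'⟩ := L2 hs hmin hs1 hnn2 ht0 ht1 hconv hsum
    refine ⟨w', ?_, ?_⟩
    · rw [hw', hw]; push_cast; ring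
    · rw [hw1', hw1]; push_cast; ring

lemma step_small (hs : A.IsState s) (hmin : ∀ x y : M, s (A.inf x y) = min (s x) (s y))
    (hs1 : A.IsState s₁) (hnn2 : ∀ z, 0 ≤ s₂ z) (ht0 : 0 < t) (ht1 : t < 1)
    (hconv : ∀ x, s x = t * s₁ x + (1 - t) * s₂ x)
    {y : M} (hy : s y ≤ 1 / 2) :
    ∃ z, 2 * |s₁ y - s y| ≤ |s₁ z - s z| := by
  by_cases h0 : s₁ y = s y
  · exact ⟨y, by rw [h0]; simp⟩
  · have hy0 : 0 < s y := by
      rcases lt_or_eq_of_le (hs.nonneg y) with h | h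
      · exact h
      · exact absurd (conv_zero hs1 hnn2 ht0 ht1 hconv h.symm) (fun hh => h0 (hh.trans h))
    set k := ⌊1 / s y⌋₊ with hk
    have hk2 : (2 : ℕ) ≤ k := by
      apply Nat.le_floor
      rw [le_div_iff₀ hy0]
      push_cast
      linarith
    have hk1 : (k : ℝ) * s y ≤ 1 := by
      have h3 := Nat.floor_le (by positivity : (0:ℝ) ≤ 1 / s y)
      rw [← hk] at h3
      calc (k : ℝ) * s y ≤ (1 / s y) * s y := by nlinarith
        _ = 1 := by field_simp
    obtain ⟨z, hz, hz1⟩ := L3 hs hmin hs1 hnn2 ht0 ht1 hconv y k hk1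
    refine ⟨z, ?_⟩
    have he : s₁ z - s z = (k : ℝ) * (s₁ y - s y) := by rw [hz, hz1]; ring
    rw [he, abs_mul, Nat.abs_cast]
    have h2k : (2 : ℝ) ≤ (k : ℝ) := by exact_mod_cast hk2
    nlinarith [abs_nonneg (s₁ y - s y)]

lemma step_any (hs : A.IsState s) (hmin : ∀ x y : M, s (A.inf x y) = min (s x) (s y))
    (hs1 : A.IsState s₁) (hnn2 : ∀ z, 0 ≤ s₂ z) (ht0 : 0 < t) (ht1 : t < 1)
    (hconv : ∀ x, s x = t * s₁ x + (1 - t) * s₂ x)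
    (y : M) : ∃ z, 2 * |s₁ y - s y| ≤ |s₁ z - s z| := by
  rcases le_or_gt (s y) (1 / 2) with h | h
  · exact step_small hs hmin hs1 hnn2 ht0 ht1 hconv h
  · have hy' : s (A.star y) ≤ 1 / 2 := by rw [hs.star_eq]; linarith
    obtain ⟨z, hz⟩ := step_small hs hmin hs1 hnn2 ht0 ht1 hconv hy'
    refine ⟨z, ?_⟩
    rw [hs.star_eq, hs1.star_eq, show (1 - s₁ y) - (1 - s y) = -(s₁ y - s y) by ring,
      abs_neg] at hz
    exact hz

lemma fst_eq (hs : A.IsState s) (hmin : ∀ x y : M, s (A.inf x y) = min (s x) (s y))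
    (hs1 : A.IsState s₁) (hnn2 : ∀ z, 0 ≤ s₂ z) (ht0 : 0 < t) (ht1 : t < 1)
    (hconv : ∀ x, s x = t * s₁ x + (1 - t) * s₂ x) : ∀ x, s₁ x = s x := by
  intro x
  have iter : ∀ n : ℕ, ∃ z, 2 ^ n * |s₁ x - s x| ≤ |s₁ z - s z| := by
    intro n
    induction n with
    | zero => exact ⟨x, by simp⟩
    | succ m ih =>
      obtain ⟨z, hz⟩ := ih
      obtain ⟨z', hz'⟩ := step_any hs hmin hs1 hnn2 ht0 ht1 hconv z
      refine ⟨z', ?_⟩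
      calc 2 ^ (m + 1) * |s₁ x - s x| = 2 * (2 ^ m * |s₁ x - s x|) := by ring
        _ ≤ 2 * |s₁ z - s z| := by linarith
        _ ≤ |s₁ z' - s z'| := hz'
  by_contra hne
  have hd : 0 < |s₁ x - s x| := abs_pos.mpr (sub_ne_zero.mpr hne)
  obtain ⟨n, hn⟩ := pow_unbounded_of_one_lt (1 / |s₁ x - s x|) (one_lt_two : (1:ℝ) < 2)
  obtain ⟨z, hz⟩ := iter n
  have hb : |s₁ z - s z| ≤ 1 := by
    rw [abs_le]
    constructor <;> nlinarith [hs.nonneg z, hs.le_one' z, hs1.nonneg z, hs1.le_one' z]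
  rw [div_lt_iff₀ hd] at hn
  nlinarith

end MinToExtremal

lemma extremal_of_min {A : MVAlgebra M} {s : M → ℝ} (hs : A.IsState s)
    (hmin : ∀ x y : M, s (A.inf x y) = min (s x) (s y)) : A.ExtremalState s := by
  refine ⟨hs, fun s₁ s₂ hs1 hs2 t ht0 ht1 hconv => ?_⟩
  have h1 : ∀ x, s₁ x = s x := fst_eq hs hmin hs1 hs2.nonneg ht0 ht1 hconv
  have hconv2 : ∀ x, s x = (1 - t) * s₂ x + (1 - (1 - t)) * s₁ x := by
    intro x; rw [hconv x]; ring
  have h2 : ∀ x, s₂ x = s x :=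
    fst_eq hs hmin hs2 hs1.nonneg (by linarith) (by linarith) hconv2
  exact ⟨funext h1, funext h2⟩

section ExtremalToMin

variable {A : MVAlgebra M} {s : M → ℝ}

lemma min_of_extremal (hs : A.IsState s) (hext : A.ExtremalState s) :
    ∀ x y : M, s (A.inf x y) = min (s x) (s y) := by
  intro x y
  refine _root_.le_antisymm (hs.inf_le_min x y) ?_
  by_contra hlt
  push_neg at hlt
  set a := A.odot x (A.star y) with ha
  set b := A.odot y (A.star x) with hb
  have hα : 0 < s a := by
    have h1 := hs.inf_add_diff x y
    have h2 : s (A.inf x y) < s x := lt_of_lt_of_le hlt (min_le_left _ _)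
    rw [← ha] at h1
    linarith
  have hβ : 0 < s b := by
    have h1 := hs.inf_add_diff y x
    rw [A.inf_comm y x, ← hb] at h1
    have h2 : s (A.inf x y) < s y := lt_of_lt_of_le hlt (min_le_right _ _)
    linarith
  have hab : A.inf a b = A.zero := by rw [ha, hb]; exact A.inf_diff_diff x y
  have hban : ∀ n, A.inf b (A.nsmul n a) = A.zero := by
    intro n
    rw [A.inf_comm]
    exact A.inf_nsmul_zero hab n
  -- the auxiliary function g
  set g : M → ℝ := fun z => ⨆ n : ℕ, s (A.inf z (A.nsmul n a)) with hg
  have seqmono : ∀ z, Monotone (fun n => s (A.inf z (A.nsmul n a))) := by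
    intro z m n hmn
    exact hs.mono (A.le_inf (A.inf_le_left _ _)
      (A.le_trans (A.inf_le_right _ _) (A.nsmul_mono hmn a)))
  have bdd : ∀ z, BddAbove (Set.range fun n => s (A.inf z (A.nsmul n a))) := by
    intro z
    refine ⟨1, ?_⟩
    rintro r ⟨n, rfl⟩
    exact hs.le_one' _
  have le_g : ∀ z n, s (A.inf z (A.nsmul n a)) ≤ g z := by
    intro z n
    exact le_ciSup (bdd z) n
  have g_le : ∀ z, g z ≤ s z := by
    intro z
    exact ciSup_le fun n => hs.mono (A.inf_le_left _ _)
  have g_nonneg : ∀ z, 0 ≤ g z := by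
    intro z
    have h0 := le_g z 0
    have : A.inf z (A.nsmul 0 a) = A.zero := A.inf_zero z
    rw [this, hs.zero_eq] at h0
    exact h0
  have g_mono : ∀ {z w : M}, A.le z w → g z ≤ g w := by
    intro z w h
    refine ciSup_le fun n => ?_
    refine _root_.le_trans (hs.mono (A.le_inf (A.le_trans (A.inf_le_left _ _) h)
      (A.inf_le_right _ _))) (le_g w n)
  have g_add : ∀ u v : M, A.odot u v = A.zero → g (A.oplus u v) = g u + g v := by
    intro u v huv
    have hle1 : g (A.oplus u v) ≤ g u + g v := by
      refine ciSup_le fun n => ?_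
      have h1 := A.inf_oplus_subdistrib u v (A.nsmul n a)
      have h2 := hs.mono h1
      have h3 := hs.subadd (A.inf u (A.nsmul n a)) (A.inf v (A.nsmul n a))
      exact _root_.le_trans h2 (_root_.le_trans h3 (add_le_add (le_g u n) (le_g v n)))
    have key : ∀ n m : ℕ,
        s (A.inf u (A.nsmul n a)) + s (A.inf v (A.nsmul m a)) ≤ g (A.oplus u v) := by
      intro n m
      set N := max n m with hN
      have bump1 : s (A.inf u (A.nsmul n a)) ≤ s (A.inf u (A.nsmul N a)) :=
        seqmono u (le_max_left n m)
      have bump2 : s (A.inf v (A.nsmul m a)) ≤ s (A.inf v (A.nsmul N a)) :=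
        seqmono v (le_max_right n m)
      have horth : A.odot (A.inf u (A.nsmul N a)) (A.inf v (A.nsmul N a)) = A.zero := by
        have h4 := A.odot_le_odot (A.inf_le_left u (A.nsmul N a)) (A.inf_le_left v (A.nsmul N a))
        rw [huv] at h4
        exact A.le_zero_iff.mp h4
      have hadd := hs.add horth
      have hle2 : A.le (A.oplus (A.inf u (A.nsmul N a)) (A.inf v (A.nsmul N a)))
          (A.inf (A.oplus u v) (A.nsmul (N + N) a)) := by
        apply A.le_inf
        · exact A.oplus_le_oplus (A.inf_le_left _ _) (A.inf_le_left _ _)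
        · rw [A.nsmul_add]
          exact A.oplus_le_oplus (A.inf_le_right _ _) (A.inf_le_right _ _)
      have h5 := hs.mono hle2
      have h6 := le_g (A.oplus u v) (N + N)
      linarith
    have hle3 : g u + g v ≤ g (A.oplus u v) := by
      have step1 : ∀ n, s (A.inf u (A.nsmul n a)) ≤ g (A.oplus u v) - g v := by
        intro n
        have step2 : g v ≤ g (A.oplus u v) - s (A.inf u (A.nsmul n a)) := by
          refine ciSup_le fun m => ?_
          have := key n m
          linarith
        linarith
      have step3 : g u ≤ g (A.oplus u v) - g v := ciSup_le step1
      linarith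
    linarith
  have g_b : g b = 0 := by
    have : (fun n : ℕ => s (A.inf b (A.nsmul n a))) = fun _ => (0 : ℝ) := by
      funext n
      rw [hban n, hs.zero_eq]
    rw [hg]
    simp only [this]
    exact ciSup_const
  have hga : s a ≤ g A.one := by
    have h7 := le_g A.one 1
    have e : A.inf A.one (A.nsmul 1 a) = a := by
      show A.inf A.one (A.oplus (A.nsmul 0 a) a) = a
      show A.inf A.one (A.oplus A.zero a) = a
      rw [A.zero_oplus, A.one_inf]
    rw [e] at h7
    exact h7
  set lam := g A.one with hlam
  have hlam0 : 0 < lam := lt_of_lt_of_le hα hga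
  have hlam1 : lam ≤ 1 := by
    have := g_le A.one
    rw [hs.one_eq] at this
    exact this
  have diff_bound : ∀ z, s z - g z ≤ 1 - lam := by
    intro z
    have h8 := g_add z (A.star z) (A.odot_star_self z)
    rw [A.oplus_star_self] at h8
    have h9 := hs.add (A.odot_star_self z)
    rw [A.oplus_star_self, hs.one_eq] at h9
    have h10 := g_le (A.star z)
    linarith
  rcases eq_or_lt_of_le hlam1 with heq | hltlam
  · -- lam = 1 : s = g, so s b = 0, contradiction
    have h11 := diff_bound b
    rw [← heq] at h11
    have h12 := g_b
    linarith
  · -- 0 < lam < 1 : build a convex decomposition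
    set f1 : M → ℝ := fun z => g z / lam with hf1
    set f2 : M → ℝ := fun z => (s z - g z) / (1 - lam) with hf2
    have st1 : A.IsState f1 := by
      refine ⟨fun z => ⟨div_nonneg (g_nonneg z) hlam0.le, ?_⟩, ?_, ?_⟩
      · rw [hf1]
        rw [div_le_one hlam0]
        exact g_mono (A.le_one z)
      · rw [hf1]
        simp only
        rw [div_self (ne_of_gt hlam0)]
      · intro u v huv
        rw [hf1]
        simp only
        rw [g_add u v huv, add_div]
    have st2 : A.IsState f2 := by
      have h1l : 0 < 1 - lam := by linarith
      refine ⟨fun z => ⟨?_, ?_⟩, ?_, ?_⟩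
      · rw [hf2]
        exact div_nonneg (by linarith [g_le z]) (by linarith)
      · rw [hf2]
        simp only
        rw [div_le_one h1l]
        exact diff_bound z
      · rw [hf2]
        simp only
        rw [hs.one_eq, ← hlam, div_self (ne_of_gt h1l)]
      · intro u v huv
        rw [hf2]
        simp only
        rw [g_add u v huv, hs.add huv]
        field_simp
        ring
    have hconv : ∀ z, s z = lam * f1 z + (1 - lam) * f2 z := by
      intro z
      rw [hf1, hf2]
      simp only
      have hne1 : lam ≠ 0 := ne_of_gt hlam0
      have hne2 : (1 : ℝ) - lam ≠ 0 := by
        intro hcon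
        rw [sub_eq_zero] at hcon
        exact (ne_of_lt hltlam) hcon.symm
      field_simp
      ring
    obtain ⟨e1, _⟩ := hext.2 f1 f2 st1 st2 lam hlam0 hltlam hconv
    have : s b = f1 b := (congrFun e1 b).symm
    rw [hf1] at this
    simp only at this
    rw [g_b, zero_div] at this
    linarith

end ExtremalToMin

end States

end MVAlgebra

theorem statement8 {M : Type*} (A : MVAlgebra M) (s : M → ℝ) (hs : A.IsState s) :
    A.ExtremalState s ↔ ∀ x y : M, s (A.inf x y) = min (s x) (s y) := by
  constructor
  · intro hext
    exact MVAlgebra.min_of_extremal hs hext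
  · intro hmin
    exact MVAlgebra.extremal_of_min hs hmin
end

section
/- If an interval effect algebra E = Γ(G,u) (with (G,u) a unigroup) has an order-determining set of states, then the map a ↦ â, where â(s) = s(a) for s ∈ S(E), is an injective effect-algebra homomorphism of E onto an effect-clan of [0,1]-valued functions on S(E). -/
/-- An effect algebra: partial addition encoded as a ternary relation `sum a b c`
meaning `a + b` is defined and equals `c`. -/
structure EffectAlgebra (E : Type*) where
  sum : E → E → E → Prop
  zero : E
  one : E
  comm : ∀ a b c, sum a b c → sum b a c
  func : ∀ a b c d, sum a b c → sum a b d → c = d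
  assoc : ∀ a b c ab abc, sum a b ab → sum ab c abc → ∃ bc, sum b c bc ∧ sum a bc abc
  orth : ∀ a, ∃! b, sum a b one
  pos : ∀ a b, sum a one b → a = zero

namespace EffectAlgebra

variable {E : Type*}

/-- The induced order: `a ≤ b` iff `a + c = b` for some `c`. -/
def le (A : EffectAlgebra E) (a b : E) : Prop := ∃ c, A.sum a c b

/-- A state on an effect algebra. -/
def IsState (A : EffectAlgebra E) (s : E → ℝ) : Prop :=
  (∀ a, 0 ≤ s a ∧ s a ≤ 1) ∧ s A.one = 1 ∧ ∀ a b c, A.sum a b c → s c = s a + s b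

end EffectAlgebra

/-- `u` is a generative strong unit for the po-group `G`. -/
def IsGenUnit (G : Type*) [AddCommGroup G] [PartialOrder G] [IsOrderedAddMonoid G] (u : G) : Prop :=
  (0 < u) ∧
  (∀ g : G, 0 ≤ g → ∃ l : List G, (∀ x ∈ l, 0 ≤ x ∧ x ≤ u) ∧ l.sum = g) ∧
  (∀ g : G, ∃ a b : G, 0 ≤ a ∧ 0 ≤ b ∧ g = a - b)

/-- `(G,u)` is a unigroup: `u` is a generative strong unit and every `H`-valued
measure on the interval `Γ(G,u)` extends uniquely to a group homomorphism. -/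
def IsUnigroup (G : Type*) [AddCommGroup G] [PartialOrder G] [IsOrderedAddMonoid G] (u : G) : Prop :=
  IsGenUnit G u ∧
  ∀ (H : Type) [AddCommGroup H] (p : G → H),
    (∀ a b : G, 0 ≤ a → 0 ≤ b → a + b ≤ u → p (a + b) = p a + p b) →
    ∃! φ : G →+ H, ∀ g : G, 0 ≤ g → g ≤ u → φ g = p g

/-- An effect-clan of `[0,1]`-valued functions on `Ω`. -/
def IsEffectClan {Ω : Type*} (𝓔 : Set (Ω → ℝ)) : Prop :=
  (∀ f ∈ 𝓔, ∀ ω, 0 ≤ f ω ∧ f ω ≤ 1) ∧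
  ((fun _ => (1 : ℝ)) ∈ 𝓔) ∧
  (∀ f ∈ 𝓔, (fun ω => 1 - f ω) ∈ 𝓔) ∧
  (∀ f ∈ 𝓔, ∀ g ∈ 𝓔, (∀ ω, f ω ≤ 1 - g ω) → (fun ω => f ω + g ω) ∈ 𝓔)

theorem statement9 {G : Type*} [AddCommGroup G] [PartialOrder G] [IsOrderedAddMonoid G] (u : G) (hu : IsUnigroup G u)
    (A : EffectAlgebra {g : G // 0 ≤ g ∧ g ≤ u})
    (hsum : ∀ a b c : {g : G // 0 ≤ g ∧ g ≤ u}, A.sum a b c ↔ (a : G) + b = c)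
    (hzero : (A.zero : G) = 0) (hone : (A.one : G) = u)
    (hod : ∀ a b : {g : G // 0 ≤ g ∧ g ≤ u},
      (∀ s : {g : G // 0 ≤ g ∧ g ≤ u} → ℝ, A.IsState s → s a ≤ s b) → A.le a b) :
    Function.Injective
      (fun a : {g : G // 0 ≤ g ∧ g ≤ u} =>
        (fun s : {s : {g : G // 0 ≤ g ∧ g ≤ u} → ℝ // A.IsState s} => s.val a)) ∧
    IsEffectClan
      (Set.range (fun a : {g : G // 0 ≤ g ∧ g ≤ u} =>
        (fun s : {s : {g : G // 0 ≤ g ∧ g ≤ u} → ℝ // A.IsState s} => s.val a))) ∧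
    ((fun s : {s : {g : G // 0 ≤ g ∧ g ≤ u} → ℝ // A.IsState s} => s.val A.one)
        = fun _ => (1 : ℝ)) ∧
    (∀ a b c : {g : G // 0 ≤ g ∧ g ≤ u}, A.sum a b c →
      (fun s : {s : {g : G // 0 ≤ g ∧ g ≤ u} → ℝ // A.IsState s} => s.val c)
        = fun s => s.val a + s.val b) := by
  -- complement construction
  have hcompl : ∀ a : {g : G // 0 ≤ g ∧ g ≤ u},
      ∃ b : {g : G // 0 ≤ g ∧ g ≤ u}, A.sum a b A.one ∧
        ∀ s : {s : {g : G // 0 ≤ g ∧ g ≤ u} → ℝ // A.IsState s},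
          s.val b = 1 - s.val a := by
    intro a
    refine ⟨⟨u - a, sub_nonneg.mpr a.2.2, sub_le_self _ a.2.1⟩, ?_, ?_⟩
    · rw [hsum]; simp [hone]
    · intro s
      have := s.2.2.2 a ⟨u - a, sub_nonneg.mpr a.2.2, sub_le_self _ a.2.1⟩ A.one
        (by rw [hsum]; simp [hone])
      rw [s.2.2.1] at this
      linarith
  have hle : ∀ a b : {g : G // 0 ≤ g ∧ g ≤ u},
      (∀ s : {s : {g : G // 0 ≤ g ∧ g ≤ u} → ℝ // A.IsState s},
        s.val a ≤ s.val b) → (a : G) ≤ b := by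
    intro a b h
    obtain ⟨c, hc⟩ := hod a b (fun s hs => h ⟨s, hs⟩)
    rw [hsum] at hc
    have := c.2.1
    calc (a : G) ≤ (a : G) + c := le_add_of_nonneg_right this
    _ = b := hc
  refine ⟨?_, ⟨?_, ?_, ?_, ?_⟩, ?_, ?_⟩
  · intro a b h
    have h' : ∀ s : {s : {g : G // 0 ≤ g ∧ g ≤ u} → ℝ // A.IsState s},
        s.val a = s.val b := fun s => congrFun h s
    exact Subtype.ext (le_antisymm (hle a b fun s => (h' s).le)
      (hle b a fun s => (h' s).ge))
  · rintro f ⟨a, rfl⟩ ω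
    exact ω.2.1 a
  · exact ⟨A.one, funext fun s => s.2.2.1⟩
  · rintro f ⟨a, rfl⟩
    obtain ⟨b, _, hb⟩ := hcompl a
    exact ⟨b, funext fun s => hb s⟩
  · rintro f ⟨a, rfl⟩ g ⟨b, rfl⟩ hfg
    obtain ⟨b', hb'sum, hb'⟩ := hcompl b
    have hab : (a : G) + b ≤ u := by
      have hale : (a : G) ≤ b' := hle a b' (fun s => by rw [hb' s]; exact hfg s)
      have heq : (b : G) + b' = u := by
        have := (hsum b b' A.one).mp hb'sum; rwa [hone] at this
      calc (a : G) + b ≤ (b' : G) + b := add_le_add_left hale _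
        _ = u := by rw [add_comm]; exact heq
    refine ⟨⟨(a : G) + b, add_nonneg a.2.1 b.2.1, hab⟩, funext fun s => ?_⟩
    exact s.2.2.2 a b ⟨(a : G) + b, add_nonneg a.2.1 b.2.1, hab⟩ ((hsum _ _ _).mpr rfl)
  · exact funext fun s => s.2.2.1
  · intro a b c h
    exact funext fun s => s.2.2.2 a b c h
end
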